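/- arXiv:2605.15422 — 2 statements merged into one kernel-verified Lean document; each statement's English description precedes it below -/
import Mathlib

section
/- Fix n > 0, d > 0, logits s : Fin n → ℝ, and values v : Fin n → ℝ^d. Let A and B be disjoint nonempty finite subsets of Fin n with A ∪ B = Fin n, with online-softmax states (m_A, ℓ_A, o_A) and (m_B, ℓ_B, o_B). Let m = max(m_A, m_B), ℓ = exp(m_A − m)·ℓ_A + exp(m_B − m)·ℓ_B, and o = exp(m_A − m)·o_A + exp(m_B − m)·o_B. Then ℓ > 0, o/ℓ = ∑_{j<n} softmax(s)_j · v_j, and m + log ℓ = log ∑_{j<n} exp(s_j). (Correctness of the FlashAttention online-softmax merge: carrying running statistics from the context phase into the decoded phase produces the exact softmax-weighted average and log-sum-exp.) -/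
/-! Moving the reference point of an online-softmax state from `a` to `c` multiplies it by
`exp (a - c)`, so the merged `ℓ` and `o` are the sums of `exp (s j - m)` and
`exp (s j - m) • v j` over the whole index set. Softmax and log-sum-exp are invariant under such a common
shift. -/

open Finset

noncomputable def softmax {n : ℕ} (x : Fin n → ℝ) : Fin n → ℝ :=
  fun j => Real.exp (x j) / ∑ l, Real.exp (x l)

section Rescale

variable {ι E : Type*} [AddCommGroup E] [Module ℝ E] (s : ι → ℝ) (A : Finset ι)

theorem exp_sub_mul_sum_exp_sub (a c : ℝ) :
    Real.exp (a - c) * ∑ j ∈ A, Real.exp (s j - a) = ∑ j ∈ A, Real.exp (s j - c) := by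
  rw [mul_sum]
  refine sum_congr rfl fun j _ => ?_
  rw [← Real.exp_add]
  ring_nf

theorem exp_sub_smul_sum_exp_sub_smul (v : ι → E) (a c : ℝ) :
    Real.exp (a - c) • ∑ j ∈ A, Real.exp (s j - a) • v j =
      ∑ j ∈ A, Real.exp (s j - c) • v j := by
  rw [smul_sum]
  refine sum_congr rfl fun j _ => ?_
  rw [smul_smul, ← Real.exp_add]
  ring_nf

theorem sum_exp_sub (c : ℝ) :
    ∑ j ∈ A, Real.exp (s j - c) = (∑ j ∈ A, Real.exp (s j)) / Real.exp c := by
  simp only [Real.exp_sub, sum_div]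

theorem sum_exp_pos (hA : A.Nonempty) : 0 < ∑ j ∈ A, Real.exp (s j) :=
  sum_pos (fun j _ => Real.exp_pos (s j)) hA

theorem add_log_sum_exp_sub (hA : A.Nonempty) (c : ℝ) :
    c + Real.log (∑ j ∈ A, Real.exp (s j - c)) = Real.log (∑ j ∈ A, Real.exp (s j)) := by
  rw [sum_exp_sub, Real.log_div (sum_exp_pos s A hA).ne' (Real.exp_ne_zero c), Real.log_exp]
  ring

end Rescale

theorem softmax_sub_const {n : ℕ} (x : Fin n → ℝ) (c : ℝ) :
    softmax (fun j => x j - c) = softmax x := by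
  funext j
  rw [softmax, softmax, sum_exp_sub x univ c, Real.exp_sub,
    div_div_div_cancel_right₀ (Real.exp_ne_zero c)]

theorem inv_sum_exp_smul_sum_exp_smul {n : ℕ} {E : Type*} [AddCommGroup E] [Module ℝ E]
    (x : Fin n → ℝ) (v : Fin n → E) :
    (∑ l, Real.exp (x l))⁻¹ • ∑ j, Real.exp (x j) • v j = ∑ j, softmax x j • v j := by
  simp only [smul_sum, smul_smul, softmax, div_eq_inv_mul]

theorem online_softmax_merge_general {n d : ℕ} (hn : 0 < n)
    (s : Fin n → ℝ) (v : Fin n → Fin d → ℝ)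
    (A B : Finset (Fin n))
    (hdisj : Disjoint A B) (hunion : A ∪ B = Finset.univ)
    (mA ℓA : ℝ) (oA : Fin d → ℝ) (mB ℓB : ℝ) (oB : Fin d → ℝ)
    (hℓA : ℓA = ∑ j ∈ A, Real.exp (s j - mA))
    (hoA : oA = ∑ j ∈ A, Real.exp (s j - mA) • v j)
    (hℓB : ℓB = ∑ j ∈ B, Real.exp (s j - mB))
    (hoB : oB = ∑ j ∈ B, Real.exp (s j - mB) • v j)
    (m ℓ : ℝ) (o : Fin d → ℝ)
    (hℓ : ℓ = Real.exp (mA - m) * ℓA + Real.exp (mB - m) * ℓB)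
    (ho : o = Real.exp (mA - m) • oA + Real.exp (mB - m) • oB) :
    0 < ℓ ∧
    ℓ⁻¹ • o = ∑ j, softmax s j • v j ∧
    m + Real.log ℓ = Real.log (∑ j, Real.exp (s j)) := by
  have hℓ_sum : ℓ = ∑ j, Real.exp (s j - m) := by
    rw [hℓ, hℓA, hℓB, exp_sub_mul_sum_exp_sub, exp_sub_mul_sum_exp_sub, ← sum_union hdisj,
      hunion]
  have ho_sum : o = ∑ j, Real.exp (s j - m) • v j := by
    rw [ho, hoA, hoB, exp_sub_smul_sum_exp_sub_smul, exp_sub_smul_sum_exp_sub_smul,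
      ← sum_union hdisj, hunion]
  have huniv : (univ : Finset (Fin n)).Nonempty := univ_nonempty_iff.2 ⟨⟨0, hn⟩⟩
  refine ⟨?_, ?_, ?_⟩
  · rw [hℓ_sum, sum_exp_sub]
    exact div_pos (sum_exp_pos s univ huniv) (Real.exp_pos m)
  · rw [hℓ_sum, ho_sum, inv_sum_exp_smul_sum_exp_smul (fun j => s j - m), softmax_sub_const]
  · rw [hℓ_sum, add_log_sum_exp_sub s univ huniv]

/-- Correctness of the FlashAttention online-softmax merge: merging the
online-softmax states of two disjoint blocks `A`, `B` covering `Fin n` yields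
`ℓ > 0`, the exact softmax-weighted average `o/ℓ = ∑ softmax(s)_j • v_j`, and the
exact log-sum-exp `m + log ℓ = log ∑ exp(s_j)`. -/
theorem online_softmax_merge {n d : ℕ} (hn : 0 < n) (hd : 0 < d)
    (s : Fin n → ℝ) (v : Fin n → Fin d → ℝ)
    (A B : Finset (Fin n)) (hA : A.Nonempty) (hB : B.Nonempty)
    (hdisj : Disjoint A B) (hunion : A ∪ B = Finset.univ)
    (mA ℓA : ℝ) (oA : Fin d → ℝ) (mB ℓB : ℝ) (oB : Fin d → ℝ)
    (hmA : mA = A.sup' hA s)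
    (hℓA : ℓA = ∑ j ∈ A, Real.exp (s j - mA))
    (hoA : oA = ∑ j ∈ A, Real.exp (s j - mA) • v j)
    (hmB : mB = B.sup' hB s)
    (hℓB : ℓB = ∑ j ∈ B, Real.exp (s j - mB))
    (hoB : oB = ∑ j ∈ B, Real.exp (s j - mB) • v j)
    (m ℓ : ℝ) (o : Fin d → ℝ)
    (hm : m = max mA mB)
    (hℓ : ℓ = Real.exp (mA - m) * ℓA + Real.exp (mB - m) * ℓB)
    (ho : o = Real.exp (mA - m) • oA + Real.exp (mB - m) • oB) :
    0 < ℓ ∧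
    ℓ⁻¹ • o = ∑ j, softmax s j • v j ∧
    m + Real.log ℓ = Real.log (∑ j, Real.exp (s j)) :=
  online_softmax_merge_general hn s v A B hdisj hunion mA ℓA oA mB ℓB oB hℓA hoA hℓB hoB m ℓ o hℓ ho
end

section
/- On triples (m, ℓ, o) ∈ ℝ × ℝ × ℝ^d, define merge((m₁,ℓ₁,o₁),(m₂,ℓ₂,o₂)) = (m, exp(m₁−m)ℓ₁ + exp(m₂−m)ℓ₂, exp(m₁−m)o₁ + exp(m₂−m)o₂) where m = max(m₁, m₂). Then merge is commutative and associative: merge(x,y) = merge(y,x) and merge(merge(x,y),z) = merge(x,merge(y,z)) for all triples x, y, z. (Hence the order in which tile-level online-softmax states are combined does not affect the result.) -/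
/-!
A state `(m, ℓ, o)` stands for the unnormalised pair `exp m • (ℓ, o)`, and it is determined by
its maximum `m` together with that pair because `exp m ≠ 0`. Under this reading the merge takes
the maximum of the maxima and adds the unnormalised pairs, so it inherits commutativity and
associativity from `max` and `+`.
-/

/-- Merge of two online-softmax states `(m, ℓ, o) ∈ ℝ × ℝ × ℝ^d`:
`merge((m₁,ℓ₁,o₁),(m₂,ℓ₂,o₂)) = (m, exp(m₁−m)ℓ₁ + exp(m₂−m)ℓ₂,
exp(m₁−m)•o₁ + exp(m₂−m)•o₂)` with `m = max(m₁,m₂)`. -/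
noncomputable def osMerge {d : ℕ} (x y : ℝ × ℝ × (Fin d → ℝ)) :
    ℝ × ℝ × (Fin d → ℝ) :=
  (max x.1 y.1,
    Real.exp (x.1 - max x.1 y.1) * x.2.1 + Real.exp (y.1 - max x.1 y.1) * y.2.1,
    Real.exp (x.1 - max x.1 y.1) • x.2.2 + Real.exp (y.1 - max x.1 y.1) • y.2.2)

section

variable {d : ℕ}

noncomputable def osValue (x : ℝ × ℝ × (Fin d → ℝ)) : ℝ × (Fin d → ℝ) :=
  Real.exp x.1 • x.2

theorem osState_ext {x y : ℝ × ℝ × (Fin d → ℝ)} (hm : x.1 = y.1) (hv : osValue x = osValue y) :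
    x = y := by
  refine Prod.ext hm (smul_right_injective _ (Real.exp_pos x.1).ne' ?_)
  simpa only [osValue, hm] using hv

theorem fst_osMerge (x y : ℝ × ℝ × (Fin d → ℝ)) : (osMerge x y).1 = max x.1 y.1 := rfl

theorem osValue_osMerge (x y : ℝ × ℝ × (Fin d → ℝ)) :
    osValue (osMerge x y) = osValue x + osValue y := by
  have hx : Real.exp (max x.1 y.1) * Real.exp (x.1 - max x.1 y.1) = Real.exp x.1 := by
    rw [← Real.exp_add, add_sub_cancel]
  have hy : Real.exp (max x.1 y.1) * Real.exp (y.1 - max x.1 y.1) = Real.exp y.1 := by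
    rw [← Real.exp_add, add_sub_cancel]
  ext <;> simp only [osValue, osMerge, Prod.smul_fst, Prod.smul_snd, Prod.fst_add, Prod.snd_add,
    smul_eq_mul, smul_add, mul_add, smul_smul, ← mul_assoc, hx, hy]

end

/-- The online-softmax merge is commutative and associative; hence the order in
which tile-level states are combined does not affect the result. -/
theorem osMerge_comm_assoc {d : ℕ} :
    (∀ x y : ℝ × ℝ × (Fin d → ℝ), osMerge x y = osMerge y x) ∧
    (∀ x y z : ℝ × ℝ × (Fin d → ℝ),
      osMerge (osMerge x y) z = osMerge x (osMerge y z)) := by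
  refine ⟨fun x y => ?_, fun x y z => ?_⟩
  · refine osState_ext (by simp only [fst_osMerge, max_comm]) ?_
    simp only [osValue_osMerge, add_comm]
  · refine osState_ext (by simp only [fst_osMerge, max_assoc]) ?_
    simp only [osValue_osMerge, add_assoc]
end
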